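/- Let R := max_{i∈[n]} ‖a_i‖, let μ > 0 be the margin (so y_i a_iᵀθ̂* ≥ μ for all i for some unit vector θ̂*), and set α := R²/μ. Then the first Batch Perceptron step θ̂₁ := θ̂₀ + (1/(2n)) Σ_{i=1}^n y_i a_i satisfies ‖θ̂₁ − α θ̂*‖² ≤ ‖θ̂₀ − α θ̂*‖² − α μ + R²/4 < ‖θ̂₀ − α θ̂*‖². -/
import Mathlib


open scoped RealInnerProductSpace BigOperators

/-- **First-step decrease for the Batch Perceptron.** With `α = R²/μ` and `θ̂₀ = 0`, the
first Batch Perceptron step `θ̂₁ = θ̂₀ + (1/(2n)) Σ_i y i a_i` satisfies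
`‖θ̂₁ − α θ̂*‖² ≤ ‖θ̂₀ − α θ̂*‖² − αμ + R²/4 < ‖θ̂₀ − α θ̂*‖²`. -/
theorem batch_perceptron_first_step_decrease {d n : ℕ}
    (a : Fin n → EuclideanSpace ℝ (Fin d)) (y : Fin n → ℝ)
    (hy : ∀ i, y i = 1 ∨ y i = -1)
    (μ R : ℝ) (hμ : 0 < μ)
    (hR : IsGreatest (Set.range fun i => ‖a i‖) R)
    (θstar : EuclideanSpace ℝ (Fin d)) (hstar : ‖θstar‖ = 1)
    (hmargin : ∀ i, μ ≤ y i * ⟪a i, θstar⟫)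
    (θ0 : EuclideanSpace ℝ (Fin d)) (hθ0 : θ0 = 0) :
    ‖θ0 + ((1 : ℝ) / (2 * n)) • (∑ i, y i • a i) - (R ^ 2 / μ) • θstar‖ ^ 2
        ≤ ‖θ0 - (R ^ 2 / μ) • θstar‖ ^ 2 - (R ^ 2 / μ) * μ + R ^ 2 / 4 ∧
    ‖θ0 - (R ^ 2 / μ) • θstar‖ ^ 2 - (R ^ 2 / μ) * μ + R ^ 2 / 4
        < ‖θ0 - (R ^ 2 / μ) • θstar‖ ^ 2 := by
  subst hθ0
  obtain ⟨i0, hi0'⟩ := hR.1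
  have hi0 : ‖a i0‖ = R := hi0'
  have hn : 0 < (n : ℝ) := by exact_mod_cast Fin.pos i0
  have habs : ∀ i, |y i| = 1 := by
    intro i; rcases hy i with h | h <;> simp [h]
  have haR : ∀ i, ‖a i‖ ≤ R := fun i => hR.2 ⟨i, rfl⟩
  have hRpos : 0 < R := by
    have h1 : μ ≤ y i0 * ⟪a i0, θstar⟫ := hmargin i0
    have h2 : y i0 * ⟪a i0, θstar⟫ ≤ ‖a i0‖ := by
      calc y i0 * ⟪a i0, θstar⟫ ≤ |y i0 * ⟪a i0, θstar⟫| := le_abs_self _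
        _ = |⟪a i0, θstar⟫| := by rw [abs_mul, habs i0, one_mul]
        _ ≤ ‖a i0‖ * ‖θstar‖ := abs_real_inner_le_norm _ _
        _ = ‖a i0‖ := by rw [hstar, mul_one]
    linarith [hi0 ▸ (h1.trans h2)]
  set α : ℝ := R ^ 2 / μ with hα
  have hαμ : α * μ = R ^ 2 := div_mul_cancel₀ _ hμ.ne'
  set g : EuclideanSpace ℝ (Fin d) := ((1 : ℝ) / (2 * n)) • (∑ i, y i • a i) with hg
  clear_value g
  -- inner product bound
  have hinner : μ / 2 ≤ ⟪g, θstar⟫ := by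
    have hsum : (n : ℝ) * μ ≤ ∑ i, y i * ⟪a i, θstar⟫ := by
      calc (n : ℝ) * μ = ∑ _i : Fin n, μ := by simp [mul_comm]
        _ ≤ ∑ i, y i * ⟪a i, θstar⟫ := Finset.sum_le_sum fun i _ => hmargin i
    have heq : ⟪g, θstar⟫ = (1 / (2 * n)) * ∑ i, y i * ⟪a i, θstar⟫ := by
      rw [hg, real_inner_smul_left, sum_inner]
      congr 1
      exact Finset.sum_congr rfl fun i _ => real_inner_smul_left _ _ _
    have h2n : (0:ℝ) < 2 * n := by positivity
    rw [heq, one_div, inv_mul_eq_div, le_div_iff₀ h2n]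
    nlinarith
  -- norm bound
  have hnorm : ‖g‖ ≤ R / 2 := by
    have h1 : ‖∑ i, y i • a i‖ ≤ (n : ℝ) * R := by
      calc ‖∑ i, y i • a i‖ ≤ ∑ i, ‖y i • a i‖ := norm_sum_le _ _
        _ ≤ ∑ _i : Fin n, R := Finset.sum_le_sum fun i _ => by
            rw [norm_smul, Real.norm_eq_abs, habs i, one_mul]; exact haR i
        _ = (n : ℝ) * R := by simp [mul_comm]
    calc ‖g‖ = (1 / (2 * n)) * ‖∑ i, y i • a i‖ := by
          rw [hg, norm_smul, Real.norm_eq_abs, abs_of_pos (by positivity)]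
      _ ≤ (1 / (2 * n)) * ((n : ℝ) * R) := by
          apply mul_le_mul_of_nonneg_left h1 (by positivity)
      _ = R / 2 := by field_simp
  have hnormsq : ‖g‖ ^ 2 ≤ R ^ 2 / 4 := by
    nlinarith [norm_nonneg g, hRpos.le]
  have hαpos : 0 < α := by positivity
  have expand : ‖g - α • θstar‖ ^ 2 = ‖g‖ ^ 2 - 2 * α * ⟪g, θstar⟫ + α ^ 2 := by
    rw [norm_sub_sq_real, real_inner_smul_right, norm_smul, Real.norm_eq_abs,
      abs_of_pos hαpos, hstar]
    ring
  have base : ‖(0 : EuclideanSpace ℝ (Fin d)) - α • θstar‖ ^ 2 = α ^ 2 := by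
    rw [zero_sub, norm_neg, norm_smul, Real.norm_eq_abs, abs_of_pos hαpos, hstar]
    ring
  constructor
  · rw [zero_add, expand, base]
    nlinarith
  · rw [base]
    nlinarith
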